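/- arXiv:2106.14668 — 2 statements merged into one kernel-verified Lean document; each statement's English description precedes it below -/
import Mathlib

section
/- Let A ∈ ℝ^{2×2}, let c > 0, and set B := cA (so b_{ij} = c·a_{ij}). Suppose (p,q) ∈ (0,1)² is an interior Nash equilibrium, i.e., ΔA(q) = 0 and ΔB(p) = 0. Let x, y : ℝ → (0,1) be a replicator dynamics trajectory for the game (A,B). Then the weighted difference of KL divergences t ↦ c·D(p‖x(t)) − D(q‖y(t)) is constant in t (it is an invariant of the motion). -/
/-- KL divergence between Bernoulli(p) and Bernoulli(x). -/
noncomputable def klBern (p x : ℝ) : ℝ :=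
  p * Real.log (p / x) + (1 - p) * Real.log ((1 - p) / (1 - x))

/-- Row player's payoff difference against column strategy (y, 1-y). -/
def payoffDiffRow (A : Matrix (Fin 2) (Fin 2) ℝ) (y : ℝ) : ℝ :=
  (A 0 0 - A 1 0) * y + (A 0 1 - A 1 1) * (1 - y)

/-- Column player's payoff difference against row strategy (x, 1-x). -/
def payoffDiffCol (B : Matrix (Fin 2) (Fin 2) ℝ) (x : ℝ) : ℝ :=
  (B 0 0 - B 0 1) * x + (B 1 0 - B 1 1) * (1 - x)

/-! Along a replicator trajectory `d/dt D(p‖x) = (x - p)·ΔA(y)` and `d/dt D(q‖y) = (y - q)·ΔB(x)`.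
Both payoff differences are affine and vanish at the equilibrium, so `ΔA(y) = α (y - q)` and
`ΔB(x) = β (x - p)` with `β = c α` when `B = c A`. Hence `c·D(p‖x) - D(q‖y)` has derivative
`c α (x - p)(y - q) - c α (y - q)(x - p) = 0`. -/

open Real

lemma mul_log_div_eq_sub (a : ℝ) {b : ℝ} (hb : b ≠ 0) :
    a * log (a / b) = a * log a - a * log b := by
  rcases eq_or_ne a 0 with rfl | ha
  · simp
  · rw [log_div ha hb, mul_sub]

lemma klBern_eq_sub (p : ℝ) {x : ℝ} (hx₀ : x ≠ 0) (hx₁ : x ≠ 1) :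
    klBern p x = p * log p + (1 - p) * log (1 - p) - (p * log x + (1 - p) * log (1 - x)) := by
  rw [klBern, mul_log_div_eq_sub p hx₀, mul_log_div_eq_sub (1 - p) (sub_ne_zero.mpr hx₁.symm)]
  ring

lemma hasDerivAt_klBern (p : ℝ) {x : ℝ} (hx₀ : x ≠ 0) (hx₁ : x ≠ 1) :
    HasDerivAt (klBern p) ((x - p) / (x * (1 - x))) x := by
  have h1x : 1 - x ≠ 0 := sub_ne_zero.mpr hx₁.symm
  have hlog : HasDerivAt (fun x => p * log x + (1 - p) * log (1 - x))
      (p * x⁻¹ + (1 - p) * (-1 / (1 - x))) x :=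
    ((hasDerivAt_log hx₀).const_mul p).add
      ((((hasDerivAt_id x).const_sub 1).log h1x).const_mul (1 - p))
  have heq : (fun x => p * log p + (1 - p) * log (1 - p) - (p * log x + (1 - p) * log (1 - x)))
      =ᶠ[nhds x] klBern p := by
    filter_upwards [(isOpen_ne.inter isOpen_ne).mem_nhds ⟨hx₀, hx₁⟩] with y hy
    exact (klBern_eq_sub p hy.1 hy.2).symm
  refine ((hlog.const_sub _).congr_of_eventuallyEq heq.symm).congr_deriv ?_
  field_simp
  ring

lemma HasDerivAt.klBern_replicator (p : ℝ) {x : ℝ → ℝ} {g t : ℝ} (hxt : x t ∈ Set.Ioo (0 : ℝ) 1)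
    (hx : HasDerivAt x (x t * (1 - x t) * g) t) :
    HasDerivAt (fun s => klBern p (x s)) ((x t - p) * g) t := by
  have hx₀ : x t ≠ 0 := hxt.1.ne'
  have hx₁ : x t ≠ 1 := hxt.2.ne
  refine ((hasDerivAt_klBern p hx₀ hx₁).comp t hx).congr_deriv ?_
  have h1x : 1 - x t ≠ 0 := sub_ne_zero.mpr hx₁.symm
  field_simp

lemma payoffDiffRow_eq_of_eq_zero {A : Matrix (Fin 2) (Fin 2) ℝ} {q : ℝ}
    (hq : payoffDiffRow A q = 0) (y : ℝ) :
    payoffDiffRow A y = (A 0 0 - A 1 0 - A 0 1 + A 1 1) * (y - q) := by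
  unfold payoffDiffRow at *
  linear_combination hq

lemma payoffDiffCol_eq_of_eq_zero {B : Matrix (Fin 2) (Fin 2) ℝ} {p : ℝ}
    (hp : payoffDiffCol B p = 0) (x : ℝ) :
    payoffDiffCol B x = (B 0 0 - B 0 1 - B 1 0 + B 1 1) * (x - p) := by
  unfold payoffDiffCol at *
  linear_combination hp

theorem rescaledCoordination_KL_invariant_general
    (A : Matrix (Fin 2) (Fin 2) ℝ) (c : ℝ)
    (B : Matrix (Fin 2) (Fin 2) ℝ) (hB : ∀ i j, B i j = c * A i j)
    (p q : ℝ)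
    (hNashA : payoffDiffRow A q = 0) (hNashB : payoffDiffCol B p = 0)
    (x y : ℝ → ℝ)
    (hx : ∀ t, x t ∈ Set.Ioo (0:ℝ) 1) (hy : ∀ t, y t ∈ Set.Ioo (0:ℝ) 1)
    (hx' : ∀ t, HasDerivAt x (x t * (1 - x t) * payoffDiffRow A (y t)) t)
    (hy' : ∀ t, HasDerivAt y (y t * (1 - y t) * payoffDiffCol B (x t)) t) :
    ∀ s t : ℝ,
      c * klBern p (x s) - klBern q (y s)
        = c * klBern p (x t) - klBern q (y t) := by
  have hderiv : ∀ t, HasDerivAt (fun s => c * klBern p (x s) - klBern q (y s)) 0 t := by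
    intro t
    refine ((((hx' t).klBern_replicator p (hx t)).const_mul c).sub
      ((hy' t).klBern_replicator q (hy t))).congr_deriv ?_
    rw [payoffDiffRow_eq_of_eq_zero hNashA, payoffDiffCol_eq_of_eq_zero hNashB]
    simp only [hB]
    ring
  exact is_const_of_deriv_eq_zero (fun t => (hderiv t).differentiableAt) (fun t => (hderiv t).deriv)

/-- In a 2×2 rescaled coordination game `(A, cA)` with `c > 0` and interior
Nash equilibrium `(p, q)`, the weighted difference of KL divergences
`c·D(p‖x(t)) − D(q‖y(t))` is invariant along replicator trajectories. -/
theorem rescaledCoordination_KL_invariant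
    (A : Matrix (Fin 2) (Fin 2) ℝ) (c : ℝ) (hc : 0 < c)
    (B : Matrix (Fin 2) (Fin 2) ℝ) (hB : ∀ i j, B i j = c * A i j)
    (p q : ℝ) (hp : p ∈ Set.Ioo (0:ℝ) 1) (hq : q ∈ Set.Ioo (0:ℝ) 1)
    (hNashA : payoffDiffRow A q = 0) (hNashB : payoffDiffCol B p = 0)
    (x y : ℝ → ℝ)
    (hx : ∀ t, x t ∈ Set.Ioo (0:ℝ) 1) (hy : ∀ t, y t ∈ Set.Ioo (0:ℝ) 1)
    (hx' : ∀ t, HasDerivAt x (x t * (1 - x t) * payoffDiffRow A (y t)) t)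
    (hy' : ∀ t, HasDerivAt y (y t * (1 - y t) * payoffDiffCol B (x t)) t) :
    ∀ s t : ℝ,
      c * klBern p (x s) - klBern q (y s)
        = c * klBern p (x t) - klBern q (y t) :=
  rescaledCoordination_KL_invariant_general A c B hB p q hNashA hNashB x y hx hy hx' hy'
end

section
/- Let A ∈ ℝ^{2×2} with S := a₁₁ − a₁₂ − a₂₁ + a₂₂ ≠ 0, let c ≠ 0, and set B := cA. Suppose (p,q) ∈ (0,1)² is an interior Nash equilibrium, i.e., ΔA(q) = 0 and ΔB(p) = 0. Let x, y : ℝ → (0,1) be a replicator dynamics trajectory for (A,B), and suppose the trajectory is T-periodic for some T > 0, i.e., x(t+T) = x(t) and y(t+T) = y(t) for all t. Then the time averages over one period equal the Nash equilibrium: (1/T)·∫₀ᵀ x(t) dt = p and (1/T)·∫₀ᵀ y(t) dt = q. -/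
lemma payoffDiffRow_sub (A : Matrix (Fin 2) (Fin 2) ℝ) (z w : ℝ) :
    payoffDiffRow A z - payoffDiffRow A w = (A 0 0 - A 0 1 - A 1 0 + A 1 1) * (z - w) := by
  unfold payoffDiffRow; ring

lemma payoffDiffCol_sub (B : Matrix (Fin 2) (Fin 2) ℝ) (z w : ℝ) :
    payoffDiffCol B z - payoffDiffCol B w = (B 0 0 - B 0 1 - B 1 0 + B 1 1) * (z - w) := by
  unfold payoffDiffCol; ring

lemma hasDerivAt_log_sub_log_one_sub {f : ℝ → ℝ} {g t : ℝ}
    (hf : HasDerivAt f (f t * (1 - f t) * g) t) (ht : f t ∈ Set.Ioo 0 1) :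
    HasDerivAt (fun s => Real.log (f s) - Real.log (1 - f s)) g t := by
  have hf0 : f t ≠ 0 := ht.1.ne'
  have hf1 : 1 - f t ≠ 0 := (sub_pos.2 ht.2).ne'
  refine ((hf.log hf0).sub ((hf.const_sub 1).log hf1)).congr_deriv ?_
  field_simp
  ring

lemma integral_eq_zero_of_replicator {f g : ℝ → ℝ} {a b : ℝ}
    (hf : ∀ t, f t ∈ Set.Ioo 0 1) (hf' : ∀ t, HasDerivAt f (f t * (1 - f t) * g t) t)
    (hab : f a = f b) (hg : IntervalIntegrable g MeasureTheory.volume a b) :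
    ∫ t in a..b, g t = 0 := by
  rw [intervalIntegral.integral_eq_sub_of_hasDerivAt
    (fun t _ => hasDerivAt_log_sub_log_one_sub (hf' t) (hf t)) hg, hab, sub_self]

lemma integral_eq_of_integral_const_mul_sub_eq_zero {f : ℝ → ℝ} {a b s r : ℝ} (hs : s ≠ 0)
    (hf : IntervalIntegrable f MeasureTheory.volume a b)
    (h : ∫ t in a..b, s * (f t - r) = 0) :
    ∫ t in a..b, f t = (b - a) * r := by
  rw [intervalIntegral.integral_const_mul,
    intervalIntegral.integral_sub hf intervalIntegrable_const, intervalIntegral.integral_const,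
    smul_eq_mul] at h
  linarith [(mul_eq_zero.1 h).resolve_left hs]

theorem periodic_time_average_eq_nash_general
    (A : Matrix (Fin 2) (Fin 2) ℝ)
    (hS : A 0 0 - A 0 1 - A 1 0 + A 1 1 ≠ 0)
    (c : ℝ) (hc : c ≠ 0)
    (B : Matrix (Fin 2) (Fin 2) ℝ) (hB : ∀ i j, B i j = c * A i j)
    (p q : ℝ)
    (hNashA : payoffDiffRow A q = 0) (hNashB : payoffDiffCol B p = 0)
    (x y : ℝ → ℝ)
    (hx : ∀ t, x t ∈ Set.Ioo (0:ℝ) 1) (hy : ∀ t, y t ∈ Set.Ioo (0:ℝ) 1)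
    (hx' : ∀ t, HasDerivAt x (x t * (1 - x t) * payoffDiffRow A (y t)) t)
    (hy' : ∀ t, HasDerivAt y (y t * (1 - y t) * payoffDiffCol B (x t)) t)
    (T : ℝ) (hT : 0 < T)
    (hxper : ∀ t, x (t + T) = x t) (hyper : ∀ t, y (t + T) = y t) :
    (1 / T) * ∫ t in (0:ℝ)..T, x t = p ∧
    (1 / T) * ∫ t in (0:ℝ)..T, y t = q := by
  set S := A 0 0 - A 0 1 - A 1 0 + A 1 1
  have hrow (z : ℝ) : payoffDiffRow A z = S * (z - q) := by
    rw [← sub_zero (payoffDiffRow A z), ← hNashA, payoffDiffRow_sub]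
  have hcol (z : ℝ) : payoffDiffCol B z = c * S * (z - p) := by
    rw [← sub_zero (payoffDiffCol B z), ← hNashB, payoffDiffCol_sub, hB, hB, hB, hB]; ring
  have hxc : Continuous x := continuous_iff_continuousAt.2 fun t => (hx' t).continuousAt
  have hyc : Continuous y := continuous_iff_continuousAt.2 fun t => (hy' t).continuousAt
  have hIx : ∫ t in (0:ℝ)..T, x t = (T - 0) * p :=
    integral_eq_of_integral_const_mul_sub_eq_zero (mul_ne_zero hc hS) (hxc.intervalIntegrable _ _)
      (integral_eq_zero_of_replicator hy (fun t => hcol (x t) ▸ hy' t)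
        (by simpa using (hyper 0).symm)
        ((continuous_const.mul (hxc.sub continuous_const)).intervalIntegrable _ _))
  have hIy : ∫ t in (0:ℝ)..T, y t = (T - 0) * q :=
    integral_eq_of_integral_const_mul_sub_eq_zero hS (hyc.intervalIntegrable _ _)
      (integral_eq_zero_of_replicator hx (fun t => hrow (y t) ▸ hx' t)
        (by simpa using (hxper 0).symm)
        ((continuous_const.mul (hyc.sub continuous_const)).intervalIntegrable _ _))
  rw [hIx, hIy, sub_zero]
  constructor <;> field_simp

/-- For a generic 2×2 rescaled game `(A, cA)` with interior Nash equilibrium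
`(p, q)`, the time averages of a periodic replicator trajectory over one
period equal the Nash equilibrium. -/
theorem periodic_time_average_eq_nash
    (A : Matrix (Fin 2) (Fin 2) ℝ)
    (hS : A 0 0 - A 0 1 - A 1 0 + A 1 1 ≠ 0)
    (c : ℝ) (hc : c ≠ 0)
    (B : Matrix (Fin 2) (Fin 2) ℝ) (hB : ∀ i j, B i j = c * A i j)
    (p q : ℝ) (hp : p ∈ Set.Ioo (0:ℝ) 1) (hq : q ∈ Set.Ioo (0:ℝ) 1)
    (hNashA : payoffDiffRow A q = 0) (hNashB : payoffDiffCol B p = 0)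
    (x y : ℝ → ℝ)
    (hx : ∀ t, x t ∈ Set.Ioo (0:ℝ) 1) (hy : ∀ t, y t ∈ Set.Ioo (0:ℝ) 1)
    (hx' : ∀ t, HasDerivAt x (x t * (1 - x t) * payoffDiffRow A (y t)) t)
    (hy' : ∀ t, HasDerivAt y (y t * (1 - y t) * payoffDiffCol B (x t)) t)
    (T : ℝ) (hT : 0 < T)
    (hxper : ∀ t, x (t + T) = x t) (hyper : ∀ t, y (t + T) = y t) :
    (1 / T) * ∫ t in (0:ℝ)..T, x t = p ∧
    (1 / T) * ∫ t in (0:ℝ)..T, y t = q :=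
  periodic_time_average_eq_nash_general A hS c hc B hB p q hNashA hNashB x y hx hy hx' hy' T hT
    hxper hyper
end
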